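/- arXiv:1910.12860 — 4 statements merged into one kernel-verified Lean document; each statement's English description precedes it below -/
import Mathlib

section
/- Let n ≥ 3 and m ≥ 2 be integers. Then the set W consisting of all pendant vertices of the jellyfish graph JFG(n, m) except one pendant vertex v_{im} at each cycle vertex i, for 1 ≤ i ≤ n (so |W| = nm − n), is a resolving set of JFG(n, m). -/
open SimpleGraph

/-!
The pendant `(i, 0)` lies in `W`. Its only neighbour is the cycle vertex `i`, which it therefore
separates from every other vertex. A pendant at `i` is at distance at most `2` from `(i, 0)`, while
pendants elsewhere are farther away: a path of length two between pendants runs through their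
common cycle vertex. Two pendants at the same cycle vertex are separated because one of them lies
in `W` and the graph is connected.
-/

/-- Vertex type of the jellyfish graph `JFG(n, m)`: cycle vertices (left) and
pendant vertices (right, a cycle vertex together with a pendant index). -/
abbrev JVert (n m : ℕ) := (ZMod n) ⊕ ((ZMod n) × Fin m)

/-- The jellyfish graph `JFG(n, m)`: the cycle `C_n` together with `m` pendant
vertices attached to each cycle vertex. -/
def jellyfish (n m : ℕ) : SimpleGraph (JVert n m) where
  Adj u v :=
    match u, v with
    | Sum.inl i, Sum.inl j => i ≠ j ∧ (i - j = 1 ∨ j - i = 1)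
    | Sum.inl i, Sum.inr p => p.1 = i
    | Sum.inr p, Sum.inl i => p.1 = i
    | Sum.inr _, Sum.inr _ => False
  symm := by
    constructor
    rintro (i | p) (j | q) h
    · exact ⟨h.1.symm, h.2.symm⟩
    · exact h
    · exact h
    · exact h
  loopless := by
    constructor
    rintro (i | p) h
    · exact h.1 rfl
    · exact h

/-- `W` is a resolving set of `G`. -/
def IsResolving {V : Type*} (G : SimpleGraph V) (W : Set V) : Prop :=
  ∀ u v : V, u ≠ v → ∃ w ∈ W, G.dist u w ≠ G.dist v w

lemma SimpleGraph.Connected.dist_self_ne_dist {V : Type*} {G : SimpleGraph V} (hG : G.Connected)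
    {u v : V} (huv : u ≠ v) : G.dist u u ≠ G.dist v u := by
  rw [dist_self, ne_comm, Ne, hG.dist_eq_zero_iff]
  exact huv.symm

section Jellyfish

variable {n m : ℕ}

@[simp]
lemma jellyfish_adj_inl_inl {i j : ZMod n} :
    (jellyfish n m).Adj (Sum.inl i) (Sum.inl j) ↔ i ≠ j ∧ (i - j = 1 ∨ j - i = 1) := Iff.rfl

@[simp]
lemma jellyfish_adj_inl_inr {i : ZMod n} {p : ZMod n × Fin m} :
    (jellyfish n m).Adj (Sum.inl i) (Sum.inr p) ↔ p.1 = i := Iff.rfl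

@[simp]
lemma jellyfish_adj_inr_inl {i : ZMod n} {p : ZMod n × Fin m} :
    (jellyfish n m).Adj (Sum.inr p) (Sum.inl i) ↔ p.1 = i := Iff.rfl

@[simp]
lemma jellyfish_not_adj_inr_inr (p q : ZMod n × Fin m) :
    ¬ (jellyfish n m).Adj (Sum.inr p) (Sum.inr q) := id

lemma jellyfish_adj_inl_inr_self (i : ZMod n) (c : Fin m) :
    (jellyfish n m).Adj (Sum.inl i) (Sum.inr (i, c)) := rfl

lemma jellyfish_dist_inl_inr_self (i : ZMod n) (c : Fin m) :
    (jellyfish n m).dist (Sum.inl i) (Sum.inr (i, c)) = 1 :=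
  dist_eq_one_iff_adj.mpr (jellyfish_adj_inl_inr_self i c)

lemma jellyfish_reachable_inl_add_one (x : ZMod n) :
    (jellyfish n m).Reachable (Sum.inl x) (Sum.inl (x + 1)) := by
  by_cases h : x = x + 1
  · rw [← h]
  · exact Adj.reachable (jellyfish_adj_inl_inl.mpr ⟨h, Or.inr (add_sub_cancel_left x 1)⟩)

lemma jellyfish_reachable_inl_zero_intCast (k : ℤ) :
    (jellyfish n m).Reachable (Sum.inl 0) (Sum.inl (k : ZMod n)) := by
  induction k with
  | zero => simp
  | succ k ih =>
    rw [Int.cast_add, Int.cast_one]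
    exact ih.trans (jellyfish_reachable_inl_add_one _)
  | pred k ih =>
    refine ih.trans (Reachable.symm ?_)
    simpa using jellyfish_reachable_inl_add_one (m := m) ((-k - 1 : ℤ) : ZMod n)

lemma jellyfish_connected : (jellyfish n m).Connected := by
  have h (v : JVert n m) : (jellyfish n m).Reachable (Sum.inl 0) v := by
    rcases v with i | ⟨i, c⟩
    · obtain ⟨k, rfl⟩ := ZMod.intCast_surjective i
      exact jellyfish_reachable_inl_zero_intCast k
    · obtain ⟨k, rfl⟩ := ZMod.intCast_surjective i
      exact (jellyfish_reachable_inl_zero_intCast k).trans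
        (jellyfish_adj_inl_inr_self _ c).reachable
  exact ⟨fun u v => (h u).symm.trans (h v)⟩

lemma jellyfish_dist_inr_inr_le_two (i : ZMod n) (a c : Fin m) :
    (jellyfish n m).dist (Sum.inr (i, a)) (Sum.inr (i, c)) ≤ 2 :=
  dist_le <| .cons (jellyfish_adj_inl_inr_self i a).symm <|
    .cons (jellyfish_adj_inl_inr_self i c) .nil

lemma jellyfish_fst_eq_of_dist_inr_inr_eq_two {p q : ZMod n × Fin m}
    (h : (jellyfish n m).dist (Sum.inr p) (Sum.inr q) = 2) : p.1 = q.1 := by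
  have hedist : (jellyfish n m).edist (Sum.inr p) (Sum.inr q) = 2 := by
    rw [← (jellyfish_connected _ _).coe_dist_eq_edist, h]
    rfl
  obtain ⟨x, hx⟩ := (edist_eq_two_iff.mp hedist).2.2
  rw [mem_commonNeighbors] at hx
  rcases x with k | r
  · exact (jellyfish_adj_inr_inl.mp hx.1).trans (jellyfish_adj_inr_inl.mp hx.2).symm
  · exact (jellyfish_not_adj_inr_inr _ _ hx.1).elim

lemma jellyfish_dist_inl_ne_dist_inl {i j : ZMod n} (hij : i ≠ j) (c : Fin m) :
    (jellyfish n m).dist (Sum.inl i) (Sum.inr (i, c)) ≠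
      (jellyfish n m).dist (Sum.inl j) (Sum.inr (i, c)) := by
  rw [jellyfish_dist_inl_inr_self, ne_comm, Ne, dist_eq_one_iff_adj, jellyfish_adj_inl_inr]
  exact hij

lemma jellyfish_dist_inl_ne_dist_inr (i : ZMod n) (c : Fin m) (q : ZMod n × Fin m) :
    (jellyfish n m).dist (Sum.inl i) (Sum.inr (i, c)) ≠
      (jellyfish n m).dist (Sum.inr q) (Sum.inr (i, c)) := by
  rw [jellyfish_dist_inl_inr_self, ne_comm, Ne, dist_eq_one_iff_adj]
  exact jellyfish_not_adj_inr_inr _ _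

lemma jellyfish_dist_inr_ne_dist_inr {i j : ZMod n} (hij : i ≠ j) (a b c : Fin m) :
    (jellyfish n m).dist (Sum.inr (i, a)) (Sum.inr (i, c)) ≠
      (jellyfish n m).dist (Sum.inr (j, b)) (Sum.inr (i, c)) := by
  intro h
  have hle := h ▸ jellyfish_dist_inr_inr_le_two i a c
  have hne_one : (jellyfish n m).dist (Sum.inr (j, b)) (Sum.inr (i, c)) ≠ 1 := by
    rw [Ne, dist_eq_one_iff_adj]
    exact jellyfish_not_adj_inr_inr _ _
  have hne_zero : (jellyfish n m).dist (Sum.inr (j, b)) (Sum.inr (i, c)) ≠ 0 := by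
    rw [Ne, jellyfish_connected.dist_eq_zero_iff]
    exact fun hji => hij (congrArg Prod.fst (Sum.inr_injective hji)).symm
  have htwo : (jellyfish n m).dist (Sum.inr (j, b)) (Sum.inr (i, c)) = 2 := by omega
  exact hij (jellyfish_fst_eq_of_dist_inr_inr_eq_two htwo).symm

end Jellyfish

theorem jellyfish_pendants_minus_one_each_resolving_general (n m : ℕ) (hm : 2 ≤ m) :
    IsResolving (jellyfish n m)
      {w : JVert n m | ∃ (i : ZMod n) (j : Fin m), (j : ℕ) ≠ m - 1 ∧ w = Sum.inr (i, j)} := by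
  set W := {w : JVert n m | ∃ (i : ZMod n) (j : Fin m), (j : ℕ) ≠ m - 1 ∧ w = Sum.inr (i, j)}
  have hW (i : ZMod n) (j : Fin m) (hj : (j : ℕ) ≠ m - 1) : Sum.inr (i, j) ∈ W := ⟨i, j, hj, rfl⟩
  have h0 : ((⟨0, by omega⟩ : Fin m) : ℕ) ≠ m - 1 := by simp only; omega
  intro u v huv
  rcases u with i | ⟨i, a⟩ <;> rcases v with j | ⟨j, b⟩
  · exact ⟨_, hW i _ h0, jellyfish_dist_inl_ne_dist_inl (fun h => huv (congrArg Sum.inl h)) _⟩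
  · exact ⟨_, hW i _ h0, jellyfish_dist_inl_ne_dist_inr i _ _⟩
  · exact ⟨_, hW j _ h0, (jellyfish_dist_inl_ne_dist_inr j _ _).symm⟩
  by_cases hij : i = j
  · subst hij
    have hab : a ≠ b := fun h => huv (h ▸ rfl)
    by_cases ha : (a : ℕ) = m - 1
    · have hb : (b : ℕ) ≠ m - 1 := fun hb => hab (Fin.ext (ha.trans hb.symm))
      exact ⟨_, hW i b hb, (jellyfish_connected.dist_self_ne_dist huv.symm).symm⟩
    · exact ⟨_, hW i a ha, jellyfish_connected.dist_self_ne_dist huv⟩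
  · exact ⟨_, hW i _ h0, jellyfish_dist_inr_ne_dist_inr hij _ _ _⟩

theorem jellyfish_pendants_minus_one_each_resolving (n m : ℕ) (hn : 3 ≤ n) (hm : 2 ≤ m) :
    IsResolving (jellyfish n m)
      {w : JVert n m | ∃ (i : ZMod n) (j : Fin m), (j : ℕ) ≠ m - 1 ∧ w = Sum.inr (i, j)} :=
  jellyfish_pendants_minus_one_each_resolving_general n m hm
end

section
/- Let n ≥ 3 and m ≥ 2 be integers. Then the adjacency dimension of the jellyfish graph JFG(n, m) equals nm − 1; in particular, the set of all pendant vertices except the single pendant vertex v_{nm} is an adjacency resolving set of JFG(n, m). -/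
open SimpleGraph

open Classical in
/-- Adjacency representation coordinate: `0` if equal, `1` if adjacent, `2` otherwise. -/
noncomputable def aRep {V : Type*} (G : SimpleGraph V) (v w : V) : ℕ :=
  if v = w then 0 else if G.Adj v w then 1 else 2

/-- `W` is an adjacency resolving set of `G`. -/
def IsAdjResolving {V : Type*} (G : SimpleGraph V) (W : Set V) : Prop :=
  ∀ u v : V, u ≠ v → ∃ w ∈ W, aRep G u w ≠ aRep G v w

/-- The adjacency dimension of `G`: the minimum cardinality of an adjacency
resolving set. -/
noncomputable def adjDim {V : Type*} (G : SimpleGraph V) : ℕ :=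
  sInf {k | ∃ W : Set V, IsAdjResolving G W ∧ W.ncard = k}

/-!
Two pendant vertices `u ≠ v` outside a resolving set `W` can only be told apart by a vertex
of `W` adjacent to exactly one of them, i.e. by the cycle vertex carrying `u` or
`v`. Hence `W` misses at most one pendant at each cycle vertex `i`, and if it misses pendants at
two cycle vertices it contains one of them. So outside `W` the map sending a vertex to its cycle
vertex is injective after deleting one cycle vertex, `|Wᶜ| ≤ n + 1`, and `|W| ≥ nm - 1`.
Conversely all pendants but one resolve: a cycle vertex is the only neighbour of its pendants, and a
pendant in the set distinguishes itself from every other vertex.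
-/

section AdjResolving

variable {V : Type*} {G : SimpleGraph V}

theorem aRep_eq_zero_iff {v w : V} : aRep G v w = 0 ↔ v = w := by
  unfold aRep; split_ifs <;> simp_all

theorem aRep_eq_one_iff {v w : V} : aRep G v w = 1 ↔ G.Adj v w := by
  unfold aRep; split_ifs <;> simp_all

theorem aRep_eq_aRep_iff_of_ne {u v w : V} (hu : u ≠ w) (hv : v ≠ w) :
    aRep G u w = aRep G v w ↔ (G.Adj u w ↔ G.Adj v w) := by
  unfold aRep; split_ifs <;> simp_all

theorem isAdjResolving_univ : IsAdjResolving G Set.univ :=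
  fun u _ huv =>
    ⟨u, trivial, fun h => huv (aRep_eq_zero_iff.mp (h ▸ aRep_eq_zero_iff.mpr rfl)).symm⟩

theorem adjDim_le {W : Set V} (hW : IsAdjResolving G W) : adjDim G ≤ W.ncard :=
  Nat.sInf_le ⟨W, hW, rfl⟩

theorem le_adjDim {k : ℕ} (h : ∀ W, IsAdjResolving G W → k ≤ W.ncard) : k ≤ adjDim G :=
  le_csInf ⟨_, _, isAdjResolving_univ, rfl⟩ fun _ ⟨W, hW, hk⟩ => hk ▸ h W hW

theorem IsAdjResolving.exists_mem_not_adj_iff {W : Set V} (hW : IsAdjResolving G W)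
    {u v : V} (huv : u ≠ v) (hu : u ∉ W) (hv : v ∉ W) :
    ∃ w ∈ W, ¬(G.Adj u w ↔ G.Adj v w) := by
  obtain ⟨w, hw, hne⟩ := hW u v huv
  exact ⟨w, hw, by rwa [← aRep_eq_aRep_iff_of_ne (by rintro rfl; exact hu hw)
    (by rintro rfl; exact hv hw)]⟩

end AdjResolving

section Jellyfish

variable {n m : ℕ}

def JVert.base : JVert n m → ZMod n := Sum.elim id Prod.fst

theorem jellyfish_adj_inr_iff {p : ZMod n × Fin m} {w : JVert n m} :
    (jellyfish n m).Adj (Sum.inr p) w ↔ w = Sum.inl p.1 := by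
  rcases w with j | q <;> simp [jellyfish, eq_comm]

theorem jellyfish_inr_adj_iff {p : ZMod n × Fin m} {w : JVert n m} :
    (jellyfish n m).Adj w (Sum.inr p) ↔ w = Sum.inl p.1 := by
  rw [adj_comm, jellyfish_adj_inr_iff]

theorem jellyfish_isAdjResolving_range_inr_sdiff (hm : 2 ≤ m) (p₀ : ZMod n × Fin m) :
    IsAdjResolving (jellyfish n m) (Set.range Sum.inr \ {Sum.inr p₀}) := by
  have hcycle : ∀ (i : ZMod n) (v : JVert n m), v ≠ Sum.inl i →
      ∃ w ∈ Set.range Sum.inr \ {Sum.inr p₀},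
        aRep (jellyfish n m) (Sum.inl i) w ≠ aRep (jellyfish n m) v w := by
    intro i v hv
    have : Nontrivial (Fin m) := Fin.nontrivial_iff_two_le.mpr hm
    obtain ⟨k, hk⟩ := exists_ne p₀.2
    refine ⟨Sum.inr (i, k),
      ⟨⟨_, rfl⟩, fun h => hk (congrArg Prod.snd (Sum.inr_injective h))⟩, ?_⟩
    rw [aRep_eq_one_iff.mpr (jellyfish_inr_adj_iff (p := (i, k)) |>.mpr rfl)]
    exact fun h => hv (jellyfish_inr_adj_iff.mp (aRep_eq_one_iff.mp h.symm))
  have hpendant : ∀ p q : ZMod n × Fin m, p ≠ q → p ≠ p₀ →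
      ∃ w ∈ Set.range Sum.inr \ {Sum.inr p₀},
        aRep (jellyfish n m) (Sum.inr p) w ≠ aRep (jellyfish n m) (Sum.inr q) w := by
    intro p q hpq hp
    refine ⟨Sum.inr p, ⟨⟨_, rfl⟩, by simpa using hp⟩, ?_⟩
    rw [aRep_eq_zero_iff.mpr rfl]
    exact fun h => hpq (Sum.inr_injective (aRep_eq_zero_iff.mp h.symm)).symm
  rintro (i | p) v huv
  · exact hcycle i v huv.symm
  rcases v with j | q
  · obtain ⟨w, hw, h⟩ := hcycle j _ huv
    exact ⟨w, hw, Ne.symm h⟩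
  have hpq : p ≠ q := Sum.inr_injective.ne_iff.mp huv
  by_cases hp : p = p₀
  · obtain ⟨w, hw, h⟩ := hpendant q p hpq.symm (hp ▸ hpq.symm)
    exact ⟨w, hw, Ne.symm h⟩
  · exact hpendant p q hpq hp

theorem ncard_range_inr_sdiff_singleton (p₀ : ZMod n × Fin m) :
    (Set.range (Sum.inr : ZMod n × Fin m → JVert n m) \ {Sum.inr p₀}).ncard = n * m - 1 := by
  rw [Set.ncard_sdiff_singleton_of_mem (Set.mem_range_self _),
    Set.ncard_range_of_injective Sum.inr_injective, Nat.card_prod, Nat.card_zmod, Nat.card_fin]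

namespace IsAdjResolving

variable {W : Set (JVert n m)} (hW : IsAdjResolving (jellyfish n m) W)
include hW

theorem jellyfish_exists_mem_of_inr_not_mem {p q : ZMod n × Fin m} (hpq : p ≠ q)
    (hp : Sum.inr p ∉ W) (hq : Sum.inr q ∉ W) :
    ∃ w ∈ W, ¬(w = Sum.inl p.1 ↔ w = Sum.inl q.1) := by
  simpa only [jellyfish_adj_inr_iff] using
    hW.exists_mem_not_adj_iff (Sum.inr_injective.ne hpq) hp hq

theorem jellyfish_eq_of_inr_not_mem {p q : ZMod n × Fin m} (hp : Sum.inr p ∉ W)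
    (hq : Sum.inr q ∉ W) (hpq : p.1 = q.1) : p = q := by
  by_contra hne
  obtain ⟨w, -, hw⟩ := hW.jellyfish_exists_mem_of_inr_not_mem hne hp hq
  exact hw (by rw [hpq])

theorem jellyfish_eq_of_inl_not_mem {i j : ZMod n} {k l : Fin m}
    (hi : Sum.inl i ∉ W) (hik : Sum.inr (i, k) ∉ W)
    (hj : Sum.inl j ∉ W) (hjl : Sum.inr (j, l) ∉ W) : i = j := by
  by_contra hne
  obtain ⟨w, hw, hwij⟩ := hW.jellyfish_exists_mem_of_inr_not_mem
    (p := (i, k)) (q := (j, l)) (by simp [hne]) hik hjl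
  by_cases hwi : w = Sum.inl i
  · exact hi (hwi ▸ hw)
  · obtain rfl : w = Sum.inl j := by tauto
    exact hj hw

theorem jellyfish_exists_inl_eq_of_base_eq {x y : JVert n m} (hx : x ∉ W) (hy : y ∉ W)
    (hxy : x ≠ y) (hbase : x.base = y.base) :
    ∃ i, Sum.inl i ∉ W ∧ (∃ k, Sum.inr (i, k) ∉ W) ∧
      (x = Sum.inl i ∨ y = Sum.inl i) := by
  rcases x with i | p <;> rcases y with j | q <;> simp only [JVert.base, Sum.elim_inl,
    Sum.elim_inr, id] at hbase
  · exact (hxy (congrArg Sum.inl hbase)).elim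
  · exact ⟨i, hx, ⟨q.2, by rwa [hbase]⟩, .inl rfl⟩
  · exact ⟨j, hy, ⟨p.2, by rwa [← hbase]⟩, .inr rfl⟩
  · exact (hxy (congrArg Sum.inr (hW.jellyfish_eq_of_inr_not_mem hx hy hbase))).elim

theorem jellyfish_ncard_compl_le [NeZero n] : Wᶜ.ncard ≤ n + 1 := by
  obtain ⟨i₀, hi₀⟩ : ∃ i₀ : ZMod n,
      ∀ i, Sum.inl i ∉ W → (∃ k, Sum.inr (i, k) ∉ W) → i = i₀ := by
    by_cases h : ∃ i₀, Sum.inl i₀ ∉ W ∧ ∃ k, Sum.inr (i₀, k) ∉ W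
    · obtain ⟨i₀, hi₀, k₀, hk₀⟩ := h
      exact ⟨i₀, fun i hi ⟨k, hk⟩ => hW.jellyfish_eq_of_inl_not_mem hi hk hi₀ hk₀⟩
    · exact ⟨0, fun i hi hk => (h ⟨i, hi, hk⟩).elim⟩
  have hinj : Set.InjOn JVert.base (Wᶜ \ {Sum.inl i₀}) := by
    rintro x ⟨hx, hx₀⟩ y ⟨hy, hy₀⟩ hxy
    by_contra hne
    obtain ⟨i, hi, hk, rfl | rfl⟩ := hW.jellyfish_exists_inl_eq_of_base_eq hx hy hne hxy
    · exact hx₀ (by rw [hi₀ i hi hk]; rfl)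
    · exact hy₀ (by rw [hi₀ i hi hk]; rfl)
  calc Wᶜ.ncard ≤ (Wᶜ \ {Sum.inl i₀}).ncard + 1 := by
        have := Set.pred_ncard_le_ncard_sdiff_singleton Wᶜ (Sum.inl i₀); omega
    _ = (JVert.base '' (Wᶜ \ {Sum.inl i₀})).ncard + 1 := by rw [hinj.ncard_image]
    _ ≤ Nat.card (ZMod n) + 1 := by grw [Set.ncard_le_card]
    _ = n + 1 := by rw [Nat.card_zmod]

theorem jellyfish_le_ncard : n * m - 1 ≤ W.ncard := by
  rcases Nat.eq_zero_or_pos n with rfl | hn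
  · simp -- `ZMod 0 = ℤ` is infinite, but then `n * m - 1 = 0` in `ℕ`
  have : NeZero n := ⟨hn.ne'⟩
  have hcard : W.ncard + Wᶜ.ncard = n + n * m := by
    rw [Set.ncard_add_ncard_compl, Nat.card_sum, Nat.card_prod, Nat.card_zmod, Nat.card_fin]
  have := hW.jellyfish_ncard_compl_le
  omega

end IsAdjResolving

end Jellyfish

theorem jellyfish_adjDim (n m : ℕ) (hm : 2 ≤ m) :
    adjDim (jellyfish n m) = n * m - 1 ∧
    IsAdjResolving (jellyfish n m)
      (Set.range (Sum.inr : ZMod n × Fin m → JVert n m) \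
        {Sum.inr ((n : ZMod n), (⟨m - 1, by omega⟩ : Fin m))}) := by
  have hres := jellyfish_isAdjResolving_range_inr_sdiff hm ((n : ZMod n), ⟨m - 1, by omega⟩)
  refine ⟨le_antisymm ?_ (le_adjDim fun W hW => hW.jellyfish_le_ncard), hres⟩
  exact (adjDim_le hres).trans_eq (ncard_range_inr_sdiff_singleton _)
end

section
/- Let n ≥ 8 be an even integer and let k = n/2 − 1. Let Γ = Cay(ℤ_n, S_k) be the Cayley graph on ℤ_n with connection set S_k = ℤ_n \ {0, n/2}. Then no clique of Γ of cardinality k is a resolving set of Γ; in particular, the set W = {1, 2, ..., k} is a clique of Γ that is not a resolving set, since the two vertices k + 1 and n have the same distance to every vertex of W. -/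
/-!
For even `n` a vertex of `cocktailParty n` is adjacent to everything except itself and its
antipode, so an antipodal pair `a, a + n/2` is at distance `1` from every other vertex, and a set
avoiding such a pair cannot resolve it. If `2 |W| < n` then `W ∪ (W + n/2) ≠ ℤ_n`, so `W` avoids
some antipodal pair; for `W = {1, …, k}` the pair is `{n, k + 1} = {0, n/2}`.
-/

open SimpleGraph

/-- The Cayley graph `Cay(ℤ_n, S)` with connection set `S = ℤ_n \ {0, n/2}`
(for `n` even this is the cocktail party graph `CP(n/2)`, i.e. `K_n` minus a
perfect matching): `x ~ y` iff `y - x ∉ {0, n/2}`.  (For `n` even the set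
`{0, n/2}` is closed under negation, so the condition is stated symmetrically;
the two conjuncts are then equivalent.) -/
def cocktailParty (n : ℕ) : SimpleGraph (ZMod n) where
  Adj x y := x ≠ y ∧ y - x ≠ ((n / 2 : ℕ) : ZMod n) ∧ x - y ≠ ((n / 2 : ℕ) : ZMod n)
  symm := by
    constructor
    rintro x y ⟨h1, h2, h3⟩
    exact ⟨h1.symm, h3, h2⟩
  loopless := by
    constructor
    rintro x ⟨h1, -⟩
    exact h1 rfl

theorem not_isResolving_of_forall_dist_eq {V : Type*} {G : SimpleGraph V} {W : Set V} {u v : V}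
    (huv : u ≠ v) (h : ∀ w ∈ W, G.dist u w = G.dist v w) : ¬ IsResolving G W := fun hW ↦ by
  obtain ⟨w, hw, hne⟩ := hW u v huv
  exact hne (h w hw)

namespace ZMod

theorem natCast_eq_natCast_iff_of_lt {n a b : ℕ} (ha : a < n) (hb : b < n) :
    (a : ZMod n) = b ↔ a = b := by
  rw [natCast_eq_natCast_iff', Nat.mod_eq_of_lt ha, Nat.mod_eq_of_lt hb]

theorem natCast_half_add_self {n : ℕ} (hn : Even n) :
    ((n / 2 : ℕ) : ZMod n) + ((n / 2 : ℕ) : ZMod n) = 0 := by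
  rw [← Nat.cast_add, ← two_mul, Nat.two_mul_div_two_of_even hn, natCast_self]

theorem natCast_half_ne_zero {n : ℕ} (hn : Even n) (h₀ : n ≠ 0) : ((n / 2 : ℕ) : ZMod n) ≠ 0 := by
  rw [Ne, natCast_eq_zero_iff]
  intro h
  have := Nat.le_of_dvd (by grind) h
  grind

end ZMod

section cocktailParty

variable {n : ℕ}

theorem cocktailParty_adj_iff (hn : Even n) {x y : ZMod n} :
    (cocktailParty n).Adj x y ↔ y ≠ x ∧ y ≠ x + ((n / 2 : ℕ) : ZMod n) := by
  have hM := ZMod.natCast_half_add_self hn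
  change x ≠ y ∧ _ ∧ _ ↔ _
  constructor
  · rintro ⟨hxy, hyx, -⟩
    exact ⟨hxy.symm, fun h ↦ hyx (by rw [h]; ring)⟩
  · rintro ⟨hyx, hy⟩
    refine ⟨hyx.symm, fun h ↦ hy (by linear_combination h), fun h ↦ hy ?_⟩
    linear_combination -h - hM

theorem cocktailParty_dist_add_half (hn : Even n) {a w : ZMod n} (hwa : w ≠ a)
    (hwa' : w ≠ a + ((n / 2 : ℕ) : ZMod n)) :
    (cocktailParty n).dist (a + ((n / 2 : ℕ) : ZMod n)) w = (cocktailParty n).dist a w := by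
  have hadj : (cocktailParty n).Adj a w := (cocktailParty_adj_iff hn).2 ⟨hwa, hwa'⟩
  have hadj' : (cocktailParty n).Adj (a + ((n / 2 : ℕ) : ZMod n)) w := by
    refine (cocktailParty_adj_iff hn).2 ⟨hwa', ?_⟩
    rwa [add_assoc, ZMod.natCast_half_add_self hn, add_zero]
  rw [dist_eq_one_iff_adj.2 hadj, dist_eq_one_iff_adj.2 hadj']

theorem cocktailParty_not_isResolving_of_two_mul_ncard_lt (hn : Even n) (h₀ : n ≠ 0)
    {W : Set (ZMod n)} (hW : 2 * W.ncard < n) : ¬ IsResolving (cocktailParty n) W := by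
  have : NeZero n := ⟨h₀⟩
  set M : ZMod n := ((n / 2 : ℕ) : ZMod n)
  have hcover : W ∪ (· + M) '' W ≠ Set.univ := by
    intro h
    have := Set.ncard_union_le W ((· + M) '' W)
    rw [h, Set.ncard_image_of_injective _ (add_left_injective M), Set.ncard_univ,
      Nat.card_zmod] at this
    omega
  obtain ⟨a, ha⟩ := (Set.ne_univ_iff_exists_notMem _).1 hcover
  refine not_isResolving_of_forall_dist_eq (u := a + M) (v := a) ?_ fun w hw ↦ ?_
  · simpa using ZMod.natCast_half_ne_zero hn h₀
  refine cocktailParty_dist_add_half hn (fun h ↦ ha (.inl (h ▸ hw))) fun h ↦ ha (.inr ⟨w, hw, ?_⟩)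
  change w + M = a
  rw [h, add_assoc, ZMod.natCast_half_add_self hn, add_zero]

theorem cocktailParty_isClique_image_Iio_half (hn : Even n) :
    (cocktailParty n).IsClique ((fun i : ℕ ↦ (i : ZMod n)) '' Set.Iio (n / 2)) := by
  rintro _ ⟨i, hi, rfl⟩ _ ⟨j, hj, rfl⟩ hij
  simp only [Set.mem_Iio] at hi hj
  refine (cocktailParty_adj_iff hn).2 ⟨Ne.symm hij, ?_⟩
  rw [← Nat.cast_add, Ne, ZMod.natCast_eq_natCast_iff_of_lt (by omega) (by omega)]
  omega

end cocktailParty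

theorem cocktailParty_clique_k_not_resolving (n : ℕ) (hn : 8 ≤ n) (hev : Even n) (k : ℕ)
    (hk : k = n / 2 - 1) :
    (∀ W : Set (ZMod n), (cocktailParty n).IsClique W → W.ncard = k →
      ¬ IsResolving (cocktailParty n) W) ∧
    (cocktailParty n).IsClique ((fun i : ℕ => (i : ZMod n)) '' Set.Icc 1 k) ∧
    ¬ IsResolving (cocktailParty n) ((fun i : ℕ => (i : ZMod n)) '' Set.Icc 1 k) ∧
    ∀ w ∈ (fun i : ℕ => (i : ZMod n)) '' Set.Icc 1 k,
      (cocktailParty n).dist ((k + 1 : ℕ) : ZMod n) w =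
        (cocktailParty n).dist ((n : ℕ) : ZMod n) w := by
  have h₀ : n ≠ 0 := by omega
  have hkM : ((k + 1 : ℕ) : ZMod n) = ((n / 2 : ℕ) : ZMod n) := by
    rw [hk, Nat.sub_add_cancel (by omega)]
  have hdist : ∀ w ∈ (fun i : ℕ => (i : ZMod n)) '' Set.Icc 1 k,
      (cocktailParty n).dist ((k + 1 : ℕ) : ZMod n) w =
        (cocktailParty n).dist ((n : ℕ) : ZMod n) w := by
    rintro _ ⟨i, ⟨hi₁, hik⟩, rfl⟩
    rw [hkM, ZMod.natCast_self, ← zero_add ((n / 2 : ℕ) : ZMod n)]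
    refine cocktailParty_dist_add_half hev ?_ ?_
    · rw [Ne, ← Nat.cast_zero, ZMod.natCast_eq_natCast_iff_of_lt (by omega) (by omega)]
      omega
    · rw [zero_add, Ne, ZMod.natCast_eq_natCast_iff_of_lt (by omega) (by omega)]
      omega
  refine ⟨fun W _ hW ↦ cocktailParty_not_isResolving_of_two_mul_ncard_lt hev h₀ (by omega),
    (cocktailParty_isClique_image_Iio_half hev).subset
      (Set.image_mono fun i hi ↦ by simp only [Set.mem_Icc, Set.mem_Iio] at hi ⊢; omega),
    not_isResolving_of_forall_dist_eq ?_ hdist, hdist⟩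
  rw [hkM, ZMod.natCast_self]
  exact ZMod.natCast_half_ne_zero hev h₀
end

section
/- Let n ≥ 8 be an even integer and let k = n/2 − 1. Let Γ = Cay(ℤ_n, S_k) be the Cayley graph on ℤ_n with connection set S_k = ℤ_n \ {0, n/2}. Then the strong metric dimension of Γ equals k + 1; in particular, the clique N = {1, 2, ..., k, k+1} is a strong resolving set of Γ. -/
open SimpleGraph

/-- `w` strongly resolves `u` and `v`: `u` lies on a shortest `v`–`w` path or
`v` lies on a shortest `u`–`w` path. -/
def StronglyResolves {V : Type*} (G : SimpleGraph V) (w u v : V) : Prop :=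
  G.dist v w = G.dist v u + G.dist u w ∨ G.dist u w = G.dist u v + G.dist v w

/-- `N` is a strong resolving set of `G`. -/
def IsStrongResolving {V : Type*} (G : SimpleGraph V) (N : Set V) : Prop :=
  ∀ u v : V, u ≠ v → ∃ w ∈ N, StronglyResolves G w u v

/-- The strong metric dimension of `G`: the minimum cardinality of a strong
resolving set. -/
noncomputable def strongMetricDim {V : Type*} (G : SimpleGraph V) : ℕ :=
  sInf {k | ∃ N : Set V, IsStrongResolving G N ∧ N.ncard = k}

/-! Write `x̄ = x + n/2` for the antipode of `x` in `ℤ_n`.  Every vertex is adjacent to all others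
except its antipode, which is at distance `2`.  A vertex `w ∉ {x, x̄}` is adjacent to both `x` and
`x̄`, so it cannot strongly resolve them: a strong resolving set must meet each of the `n/2`
antipodal pairs.  Conversely, a set meeting every antipodal pair is strongly resolving: if `u, v`
lie outside it then `ū` lies in it, and `v` is a common neighbour of `u` and `ū`, hence on a
shortest `u`–`ū` path.  The set `{1, …, n/2}` meets every antipodal pair. -/

lemma SimpleGraph.dist_eq_two_of_adj_of_adj {V : Type*} {G : SimpleGraph V} {u v w : V}
    (hne : u ≠ v) (hnadj : ¬ G.Adj u v) (hu : G.Adj u w) (hv : G.Adj w v) : G.dist u v = 2 := by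
  rw [dist, edist_eq_two_iff.mpr ⟨hne, hnadj, w, hu, hv.symm⟩]
  rfl

lemma Nat.card_le_two_mul_ncard {α : Type*} [Finite α] {s : Set α} {f : α → α}
    (hf : Function.Injective f) (hs : ∀ x, x ∈ s ∨ f x ∈ s) : Nat.card α ≤ 2 * s.ncard := by
  have hpre : (f ⁻¹' s).ncard ≤ s.ncard :=
    Set.ncard_le_ncard_of_injOn f (fun _ ha => ha) hf.injOn
  calc Nat.card α = (s ∪ f ⁻¹' s).ncard := by
        rw [show s ∪ f ⁻¹' s = Set.univ from Set.eq_univ_of_forall hs, Set.ncard_univ]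
    _ ≤ s.ncard + (f ⁻¹' s).ncard := Set.ncard_union_le _ _
    _ ≤ 2 * s.ncard := by omega

lemma ZMod.natCast_injOn_Iio (n : ℕ) : Set.InjOn (Nat.cast : ℕ → ZMod n) (Set.Iio n) :=
  fun a ha b hb h => by
    simpa [Nat.mod_eq_of_lt ha, Nat.mod_eq_of_lt hb] using (ZMod.natCast_eq_natCast_iff' a b n).1 h

lemma ZMod.natCast_half_add_self_s18 {n : ℕ} (hn : Even n) :
    ((n / 2 : ℕ) : ZMod n) + ((n / 2 : ℕ) : ZMod n) = 0 := by
  have := hn.two_dvd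
  rw [← Nat.cast_add, show n / 2 + n / 2 = n by omega, ZMod.natCast_self]

lemma ZMod.natCast_half_ne_zero_s18 {n : ℕ} (h2 : 2 ≤ n) : ((n / 2 : ℕ) : ZMod n) ≠ 0 := by
  rw [Ne, ZMod.natCast_eq_zero_iff]
  exact Nat.not_dvd_of_pos_of_lt (by omega) (by omega)

lemma ZMod.natCast_half_ne_one {n : ℕ} (h4 : 4 ≤ n) : ((n / 2 : ℕ) : ZMod n) ≠ 1 := by
  intro h
  have := ZMod.natCast_injOn_Iio n (Set.mem_Iio.2 (by omega)) (Set.mem_Iio.2 (by omega))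
    (h.trans Nat.cast_one.symm)
  omega

section StrongResolving

variable {V : Type*} (G : SimpleGraph V)

lemma stronglyResolves_left (u v : V) : StronglyResolves G u u v :=
  Or.inl (by rw [dist_self, add_zero])

lemma stronglyResolves_right (u v : V) : StronglyResolves G v u v :=
  Or.inr (by rw [dist_self, add_zero])

lemma not_stronglyResolves_of_dist_eq {u v w : V} (huv : G.dist u v ≠ 0)
    (h : G.dist u w = G.dist v w) : ¬ StronglyResolves G w u v := by
  have := G.dist_comm (u := u) (v := v)
  rintro (h' | h') <;> omega

lemma strongMetricDim_eq_ncard {N : Set V} (hN : IsStrongResolving G N)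
    (hmin : ∀ N', IsStrongResolving G N' → N.ncard ≤ N'.ncard) :
    strongMetricDim G = N.ncard :=
  le_antisymm (Nat.sInf_le ⟨N, hN, rfl⟩)
    (le_csInf ⟨_, N, hN, rfl⟩ (by rintro _ ⟨N', hN', rfl⟩; exact hmin N' hN'))

end StrongResolving

namespace CocktailParty

variable {n : ℕ}

def antipode (x : ZMod n) : ZMod n := x + ((n / 2 : ℕ) : ZMod n)

lemma antipode_antipode (hn : Even n) (x : ZMod n) : antipode (antipode x) = x := by
  rw [antipode, antipode, add_assoc, ZMod.natCast_half_add_self_s18 hn, add_zero]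

lemma antipode_injective : Function.Injective (antipode (n := n)) :=
  add_left_injective _

lemma antipode_ne_self (h2 : 2 ≤ n) (x : ZMod n) : antipode x ≠ x := by
  simpa [antipode] using ZMod.natCast_half_ne_zero_s18 h2

lemma adj_iff (hn : Even n) {x y : ZMod n} :
    (cocktailParty n).Adj x y ↔ x ≠ y ∧ y ≠ antipode x := by
  have hcc := ZMod.natCast_half_add_self_s18 hn
  simp only [cocktailParty, antipode]
  constructor
  · rintro ⟨hxy, h, -⟩
    exact ⟨hxy, fun e => h (by linear_combination e)⟩
  · rintro ⟨hxy, h⟩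
    exact ⟨hxy, fun e => h (by linear_combination e), fun e => h (by linear_combination -e - hcc)⟩

lemma dist_eq_one (hn : Even n) {x y : ZMod n} (hxy : x ≠ y)
    (hy : y ≠ antipode x) : (cocktailParty n).dist x y = 1 :=
  dist_eq_one_iff_adj.mpr ((adj_iff hn).mpr ⟨hxy, hy⟩)

lemma dist_antipode (hn : Even n) (h4 : 4 ≤ n) (x : ZMod n) :
    (cocktailParty n).dist x (antipode x) = 2 := by
  have : Fact (1 < n) := ⟨by omega⟩
  have h1 := ZMod.natCast_half_ne_one h4
  refine dist_eq_two_of_adj_of_adj (antipode_ne_self (by omega) x).symm ?_ (w := x + 1) ?_ ?_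
  all_goals simp [adj_iff hn, antipode, h1.symm]

lemma isStrongResolving_iff (hn : Even n) (h4 : 4 ≤ n) {N : Set (ZMod n)} :
    IsStrongResolving (cocktailParty n) N ↔ ∀ x, x ∈ N ∨ antipode x ∈ N := by
  constructor
  · intro hN x
    obtain ⟨w, hw, hres⟩ := hN x (antipode x) (antipode_ne_self (by omega) x).symm
    by_contra! hout
    have hwx : x ≠ w := fun h => hout.1 (h ▸ hw)
    have hwa : antipode x ≠ w := fun h => hout.2 (h ▸ hw)
    refine not_stronglyResolves_of_dist_eq _ (by rw [dist_antipode hn h4]; omega) ?_ hres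
    rw [dist_eq_one hn hwx hwa.symm,
      dist_eq_one hn hwa (by rw [antipode_antipode hn]; exact hwx.symm)]
  · intro hN u v huv
    by_cases hu : u ∈ N
    · exact ⟨u, hu, stronglyResolves_left _ u v⟩
    by_cases hv : v ∈ N
    · exact ⟨v, hv, stronglyResolves_right _ u v⟩
    have hau : antipode u ∈ N := (hN u).resolve_left hu
    have hva : v ≠ antipode u := fun h => hv (h ▸ hau)
    refine ⟨antipode u, hau, Or.inr ?_⟩
    rw [dist_antipode hn h4, dist_eq_one hn huv hva,
      dist_eq_one hn hva (antipode_injective.ne huv)]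

lemma half_le_ncard_of_isStrongResolving (hn : Even n) (h4 : 4 ≤ n) {N : Set (ZMod n)}
    (hN : IsStrongResolving (cocktailParty n) N) : n / 2 ≤ N.ncard := by
  have : NeZero n := ⟨by omega⟩
  have := Nat.card_le_two_mul_ncard antipode_injective
    ((isStrongResolving_iff hn h4).1 hN)
  rw [Nat.card_zmod] at this
  omega

lemma mem_or_antipode_mem_image_Icc (hn : Even n) (h2 : 2 ≤ n) (x : ZMod n) :
    x ∈ (fun i : ℕ => (i : ZMod n)) '' Set.Icc 1 (n / 2) ∨
      antipode x ∈ (fun i : ℕ => (i : ZMod n)) '' Set.Icc 1 (n / 2) := by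
  have : NeZero n := ⟨by omega⟩
  have hx : (x.val : ZMod n) = x := ZMod.natCast_zmod_val x
  have hlt := ZMod.val_lt x
  have := hn.two_dvd
  by_cases h : 1 ≤ x.val ∧ x.val ≤ n / 2
  · exact Or.inl ⟨x.val, h, hx⟩
  right
  rcases Nat.eq_zero_or_pos x.val with h0 | hpos
  · refine ⟨n / 2, ⟨by omega, le_rfl⟩, ?_⟩
    rw [antipode, ← hx, h0, Nat.cast_zero, zero_add]
  · refine ⟨x.val - n / 2, ⟨by omega, by omega⟩, ?_⟩
    calc ((x.val - n / 2 : ℕ) : ZMod n) = ((x.val - n / 2 + n : ℕ) : ZMod n) := by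
          rw [Nat.cast_add, ZMod.natCast_self, add_zero]
      _ = antipode x := by
          rw [show x.val - n / 2 + n = x.val + n / 2 by omega, Nat.cast_add, hx, antipode]

lemma ncard_image_Icc : ((fun i : ℕ => (i : ZMod n)) '' Set.Icc 1 (n / 2)).ncard = n / 2 := by
  rw [((ZMod.natCast_injOn_Iio n).mono fun i hi => ?_).ncard_image, Set.ncard_Icc_nat]
  · omega
  · simp only [Set.mem_Icc, Set.mem_Iio] at hi ⊢
    omega

end CocktailParty

theorem cocktailParty_strongMetricDim (n : ℕ) (hn : 8 ≤ n) (hev : Even n) (k : ℕ)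
    (hk : k = n / 2 - 1) :
    strongMetricDim (cocktailParty n) = k + 1 ∧
    IsStrongResolving (cocktailParty n) ((fun i : ℕ => (i : ZMod n)) '' Set.Icc 1 (k + 1)) := by
  have h4 : 4 ≤ n := by omega
  rw [show k + 1 = n / 2 by omega]
  have hN := (CocktailParty.isStrongResolving_iff hev h4).2
    (CocktailParty.mem_or_antipode_mem_image_Icc hev (by omega))
  refine ⟨?_, hN⟩
  have hmin : ∀ N', IsStrongResolving (cocktailParty n) N' →
      ((fun i : ℕ => (i : ZMod n)) '' Set.Icc 1 (n / 2)).ncard ≤ N'.ncard := fun N' hN' =>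
    CocktailParty.ncard_image_Icc.trans_le
      (CocktailParty.half_le_ncard_of_isStrongResolving hev h4 hN')
  rw [strongMetricDim_eq_ncard _ hN hmin, CocktailParty.ncard_image_Icc]
end
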